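/- arXiv:1104.2882 — 5 statements merged into one kernel-verified Lean document; each statement's English description precedes it below -/
import Mathlib

section
/- Let C = (v_1, ..., v_ℓ) be a cycle of nonnegative total weight in a weighted graph, and let s be a vertex of C. Then there exists an edge (v_i, v_{i+1}) of C such that both ⌈w(C)/2⌉ − w(v_i, v_{i+1}) ≤ d_C[s, v_i] ≤ ⌊w(C)/2⌋ and ⌈w(C)/2⌉ − w(v_i, v_{i+1}) ≤ d_C[v_{i+1}, s] ≤ ⌊w(C)/2⌋. -/
/-- Weight of the arc of a cycle (given as an `ℓ`-periodic sequence of vertices `c`)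
starting at position `a` and traversing `k` consecutive edges. -/
def arcW {V α : Type*} [AddCommMonoid α] (w : V → V → α) (c : ℕ → V) (a k : ℕ) : α :=
  ∑ j ∈ Finset.range k, w (c (a + j)) (c (a + j + 1))

lemma arcW_add {V α : Type*} [AddCommMonoid α] (w : V → V → α) (c : ℕ → V) (a m n : ℕ) :
    arcW w c a (m + n) = arcW w c a m + arcW w c (a + m) n := by
  unfold arcW
  rw [Finset.sum_range_add]
  congr 1
  exact Finset.sum_congr rfl fun j _ => by congr 2 <;> omega

lemma arcW_succ {V α : Type*} [AddCommMonoid α] (w : V → V → α) (c : ℕ → V) (a k : ℕ) :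
    arcW w c a (k + 1) = arcW w c a k + w (c (a + k)) (c (a + k + 1)) := by
  unfold arcW
  rw [Finset.sum_range_succ]

lemma arcW_period {V α : Type*} [AddCommMonoid α] (w : V → V → α) (ℓ : ℕ) (c : ℕ → V)
    (hℓ : 1 ≤ ℓ) (hper : ∀ j, c (j + ℓ) = c j) (a : ℕ) :
    arcW w c a ℓ = arcW w c 0 ℓ := by
  induction a with
  | zero => rfl
  | succ a ih =>
    rw [← ih]
    obtain ⟨n, rfl⟩ : ∃ n, ℓ = n + 1 := ⟨ℓ - 1, by omega⟩
    have h1 : arcW w c a (n + 1) = w (c a) (c (a + 1)) + arcW w c (a + 1) n := by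
      rw [show n + 1 = 1 + n by omega, arcW_add]
      congr 1
      unfold arcW
      simp
    have h2 : arcW w c (a + 1) (n + 1) = arcW w c (a + 1) n + w (c a) (c (a + 1)) := by
      rw [arcW_succ]
      have e1 : c (a + 1 + n) = c a := by
        have := hper a
        rw [← this]; congr 1; omega
      have e2 : c (a + 1 + n + 1) = c (a + 1) := by
        have := hper (a + 1)
        rw [← this]; congr 1
      rw [e1, e2]
    rw [h1, h2, add_comm]

/-- critical edge lemma: for a cycle `C` with integer edge weights
(possibly negative) of nonnegative total weight `wC = arcW w v 0 ℓ`, and any vertex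
`s = v a` on `C`, there is an edge `(v (a+k), v (a+k+1))` of `C` such that both
`⌈wC/2⌉ − w(e) ≤ d_C[s, v_{a+k}] ≤ ⌊wC/2⌋` and
`⌈wC/2⌉ − w(e) ≤ d_C[v_{a+k+1}, s] ≤ ⌊wC/2⌋`.
Since `wC ≥ 0`, `⌊wC/2⌋ = wC / 2` and `⌈wC/2⌉ = (wC + 1) / 2` in integer division. -/
theorem stmt1 {V : Type*} (E : V → V → Prop) (w : V → V → ℤ)
    (ℓ : ℕ) (v : ℕ → V) (hℓ : 1 ≤ ℓ)
    (hper : ∀ j, v (j + ℓ) = v j)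
    (hedge : ∀ j, E (v j) (v (j + 1)))
    (hwC : 0 ≤ arcW w v 0 ℓ) (a : ℕ) :
    ∃ k < ℓ,
      (arcW w v 0 ℓ + 1) / 2 - w (v (a + k)) (v (a + k + 1)) ≤ arcW w v a k ∧
      arcW w v a k ≤ arcW w v 0 ℓ / 2 ∧
      (arcW w v 0 ℓ + 1) / 2 - w (v (a + k)) (v (a + k + 1)) ≤
        arcW w v (a + k + 1) (ℓ - (k + 1)) ∧
      arcW w v (a + k + 1) (ℓ - (k + 1)) ≤ arcW w v 0 ℓ / 2 := by
  classical
  set W := arcW w v 0 ℓ with hWdef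
  have hPtop : (W + 1) / 2 ≤ arcW w v a ((ℓ - 1) + 1) := by
    have h : (ℓ - 1) + 1 = ℓ := by omega
    rw [h, arcW_period w ℓ v hℓ hper a]
    omega
  have hex : ∃ k, (W + 1) / 2 ≤ arcW w v a (k + 1) := ⟨ℓ - 1, hPtop⟩
  set k := Nat.find hex with hkdef
  have hk : (W + 1) / 2 ≤ arcW w v a (k + 1) := Nat.find_spec hex
  have hkle : k ≤ ℓ - 1 := Nat.find_le hPtop
  have hklt : k < ℓ := by omega
  have hDe : (W + 1) / 2 ≤ arcW w v a k + w (v (a + k)) (v (a + k + 1)) := by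
    rwa [arcW_succ] at hk
  have hD : arcW w v a k ≤ W / 2 := by
    rcases Nat.eq_zero_or_eq_succ_pred k with h0 | h1
    · rw [h0]
      show arcW w v a 0 ≤ W / 2
      unfold arcW
      simp
      omega
    · have hm : ¬ ((W + 1) / 2 ≤ arcW w v a ((k - 1) + 1)) :=
        Nat.find_min hex (by omega)
      have : (k - 1) + 1 = k := by omega
      rw [this] at hm
      omega
  have hR : arcW w v (a + k + 1) (ℓ - (k + 1)) =
      W - (arcW w v a k + w (v (a + k)) (v (a + k + 1))) := by
    have h1 : arcW w v a ℓ = W := arcW_period w ℓ v hℓ hper a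
    have h2 : ℓ = (k + 1) + (ℓ - (k + 1)) := by omega
    rw [h2, arcW_add, arcW_succ] at h1
    have h3 : a + (k + 1) = a + k + 1 := by omega
    rw [h3] at h1
    omega
  refine ⟨k, hklt, by omega, hD, ?_, ?_⟩ <;> rw [hR] <;> omega
end

section
/- Let x, y, z be three distinct vertices of an undirected graph G with positive edge weights. Let P_1 be a simple shortest path from y to x whose second vertex (neighbor of y on P_1) is y', and let P_2 be a simple shortest path from x to z whose second-to-last vertex is z'. Suppose y' ≠ z, z' ≠ y, and (z, y) ∈ E. Then the edge set P_1 ∪ P_2 ∪ {(z, y)} contains a simple cycle of weight at most w(P_1) + w(P_2) + w(z, y). -/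
/-!
Concatenating `P₁` and `P₂` gives a walk from `y` to `z` that uses only edges of `P₁ ∪ P₂`;
erasing its loops leaves a simple path from `y` to `z` that is no heavier, since weights are
nonnegative. This path is not the single edge `yz`: in the simple path `P₁`, which starts at `y`,
an edge `yz` would be the first one, forcing `y' = z`; symmetrically in `P₂` it would force
`z' = y`. So the path has at least three vertices, and the edge `zy` closes it into a simple cycle.
-/

def IsWalk {V : Type*} (E : V → V → Prop) : List V → Prop
  | [] => True
  | [_] => True
  | a :: b :: l => E a b ∧ IsWalk E (b :: l)

def IsWalkFrom {V : Type*} (E : V → V → Prop) (p : List V) (u x : V) : Prop :=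
  IsWalk E p ∧ p.head? = some u ∧ p.getLast? = some x

def wWeight {V α : Type*} [AddCommMonoid α] (w : V → V → α) : List V → α
  | a :: b :: l => w a b + wWeight w (b :: l)
  | _ => 0

/-- `{a, b}` is an (undirected) edge of the path given by the vertex list `p`. -/
def edgeIn {V : Type*} (p : List V) (a b : V) : Prop :=
  (a, b) ∈ p.zip p.tail ∨ (b, a) ∈ p.zip p.tail

namespace List

variable {α : Type*}

@[simp]
theorem consecutivePairs_nil : ([] : List α).consecutivePairs = [] := rfl

@[simp]
theorem consecutivePairs_singleton (a : α) : [a].consecutivePairs = [] := rfl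

@[simp]
theorem consecutivePairs_cons_cons (a b : α) (l : List α) :
    (a :: b :: l).consecutivePairs = (a, b) :: (b :: l).consecutivePairs := rfl

theorem mem_consecutivePairs_iff {l : List α} {a b : α} :
    (a, b) ∈ l.consecutivePairs ↔ ∃ l₁ l₂, l = l₁ ++ a :: b :: l₂ := by
  induction l using twoStepInduction with
  | nil => simp
  | singleton c => simp [singleton_eq_append_iff]
  | cons_cons c d t _ ih =>
    rw [consecutivePairs_cons_cons, mem_cons, ih, Prod.mk.injEq]
    constructor
    · rintro (⟨rfl, rfl⟩ | ⟨l₁, l₂, h⟩)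
      · exact ⟨[], t, rfl⟩
      · exact ⟨c :: l₁, l₂, by rw [h, cons_append]⟩
    · rintro ⟨_ | ⟨e, l₁⟩, l₂, h⟩
      · simp_all
      · simp only [cons_append, cons.injEq] at h
        exact Or.inr ⟨l₁, l₂, h.2⟩

theorem mem_consecutivePairs_reverse {l : List α} {a b : α} :
    (a, b) ∈ l.reverse.consecutivePairs ↔ (b, a) ∈ l.consecutivePairs := by
  simp only [mem_consecutivePairs_iff, reverse_eq_iff]
  constructor
  · rintro ⟨l₁, l₂, rfl⟩
    exact ⟨l₂.reverse, l₁.reverse, by simp⟩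
  · rintro ⟨l₁, l₂, rfl⟩
    exact ⟨l₂.reverse, l₁.reverse, by simp⟩

theorem consecutivePairs_suffix_cons (a : α) (l : List α) :
    l.consecutivePairs <:+ (a :: l).consecutivePairs := by
  cases l with
  | nil => exact suffix_refl _
  | cons b l => exact suffix_cons _ _

theorem IsSuffix.consecutivePairs {l₁ l₂ : List α} (h : l₁ <:+ l₂) :
    l₁.consecutivePairs <:+ l₂.consecutivePairs := by
  obtain ⟨s, rfl⟩ := h
  induction s with
  | nil => exact suffix_refl _
  | cons a s ih => exact ih.trans (consecutivePairs_suffix_cons a _)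

theorem consecutivePairs_append_cons (l₁ : List α) (a : α) (l₂ : List α) :
    (l₁ ++ a :: l₂).consecutivePairs =
      (l₁ ++ [a]).consecutivePairs ++ (a :: l₂).consecutivePairs := by
  induction l₁ using twoStepInduction with
  | nil => rfl
  | singleton b => rfl
  | cons_cons b c t _ ih => simp only [cons_append, consecutivePairs_cons_cons] at ih ⊢; rw [ih]

theorem consecutivePairs_append_tail {l₁ l₂ : List α} (h : l₁.getLast? = l₂.head?) :
    (l₁ ++ l₂.tail).consecutivePairs = l₁.consecutivePairs ++ l₂.consecutivePairs := by
  rcases l₂ with _ | ⟨a, l₂⟩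
  · simp_all
  · obtain ⟨l₁, rfl⟩ : ∃ l, l₁ = l ++ [a] := by
      simpa [getLast?_eq_some_iff] using h
    rw [append_assoc, singleton_append, tail_cons, consecutivePairs_append_cons]

theorem getLast?_append_tail {l₁ l₂ : List α} (h : l₁.getLast? = l₂.head?) :
    (l₁ ++ l₂.tail).getLast? = l₂.getLast? := by
  rcases l₂ with _ | ⟨a, l₂⟩
  · simp_all
  · simp_all [getLast?_append, getLast?_cons]

theorem Nodup.getElem?_one_eq_of_mem_consecutivePairs {l : List α} {a b : α} (hl : l.Nodup)
    (ha : l.head? = some a) (hab : (a, b) ∈ l.consecutivePairs) : l[1]? = some b := by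
  obtain ⟨_ | ⟨c, l₁⟩, l₂, rfl⟩ := mem_consecutivePairs_iff.mp hab
  · rfl
  · simp only [cons_append, head?_cons, Option.some.injEq] at ha
    subst ha
    simp [nodup_cons] at hl

theorem getD_mem_consecutivePairs {l : List α} (d : α) {i : ℕ} (hi : i + 1 < l.length) :
    (l.getD i d, l.getD (i + 1) d) ∈ l.consecutivePairs := by
  induction l using twoStepInduction generalizing i with
  | nil => simp at hi
  | singleton => simp at hi
  | cons_cons a b t _ ih =>
    rcases i with _ | i
    · simp
    · exact mem_cons_of_mem _ (ih b (by simpa using hi))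

theorem getD_zero_of_head?_eq {l : List α} {a d : α} (ha : l.head? = some a) :
    l.getD 0 d = a := by
  simp [getD_eq_getElem?_getD, ← head?_eq_getElem?, ha]

theorem getD_length_sub_one_of_getLast?_eq {l : List α} {b d : α} (hb : l.getLast? = some b) :
    l.getD (l.length - 1) d = b := by
  simp [getD_eq_getElem?_getD, ← getLast?_eq_getElem?, hb]

theorem exists_nodup_consecutivePairs_sublist (l : List α) :
    ∃ l' : List α, l'.Nodup ∧ l'.head? = l.head? ∧ l'.getLast? = l.getLast? ∧
      l'.consecutivePairs <+ l.consecutivePairs := by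
  induction l with
  | nil => exact ⟨[], nodup_nil, rfl, rfl, Sublist.refl _⟩
  | cons a t ih =>
    obtain ⟨q, hq, hqh, hql, hqs⟩ := ih
    by_cases ha : a ∈ q
    · obtain ⟨s, r, rfl⟩ := append_of_mem ha
      refine ⟨a :: r, hq.sublist (sublist_append_right _ _), rfl, ?_, ?_⟩
      · rw [getLast?_cons, getLast?_cons, ← hql]
        simp [getLast?_append, getLast?_cons]
      · exact (suffix_append _ _).consecutivePairs.sublist.trans
          (hqs.trans (consecutivePairs_suffix_cons a t).sublist)
    · refine ⟨a :: q, nodup_cons.mpr ⟨ha, hq⟩, rfl, by rw [getLast?_cons, getLast?_cons, hql], ?_⟩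
      rcases t with _ | ⟨b, t⟩
      · obtain rfl : q = [] := by simpa using hqh
        exact Sublist.refl _
      · obtain ⟨q, rfl⟩ : ∃ q', q = b :: q' := by
          rcases q with _ | ⟨c, q⟩ <;> simp_all
        simpa using hqs

theorem three_le_length_of_not_mem_consecutivePairs {l : List α} {a b : α} (hab : a ≠ b)
    (ha : l.head? = some a) (hb : l.getLast? = some b) (h : (a, b) ∉ l.consecutivePairs) :
    3 ≤ l.length := by
  match l, ha, hb with
  | [_], ha, hb => simp_all
  | [_, _], ha, hb => simp_all
  | _ :: _ :: _ :: _, _, _ => simp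

end List

section Walks

variable {V : Type*}

theorem isWalk_iff_forall_mem_consecutivePairs {E : V → V → Prop} {p : List V} :
    IsWalk E p ↔ ∀ e ∈ p.consecutivePairs, E e.1 e.2 := by
  induction p using List.twoStepInduction with
  | nil | singleton => simp [IsWalk]
  | cons_cons a b t _ ih => simp [IsWalk, ih]

variable {α : Type*} [AddCommMonoid α]

theorem wWeight_eq_sum_consecutivePairs (w : V → V → α) (p : List V) :
    wWeight w p = (p.consecutivePairs.map fun e => w e.1 e.2).sum := by
  induction p using List.twoStepInduction with
  | nil | singleton => rfl
  | cons_cons a b t _ ih => simp [wWeight, ih]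

theorem wWeight_eq_sum_range (w : V → V → α) (d : V) (p : List V) :
    wWeight w p = ∑ j ∈ Finset.range (p.length - 1), w (p.getD j d) (p.getD (j + 1) d) := by
  induction p using List.twoStepInduction with
  | nil | singleton => rfl
  | cons_cons a b t _ ih =>
    rw [wWeight, ih b]
    simp only [List.length_cons, Nat.add_sub_cancel, Finset.sum_range_succ']
    exact add_comm _ _

theorem wWeight_le_of_consecutivePairs_sublist [Preorder α] [AddLeftMono α] {w : V → V → α}
    {p q : List V} (h : q.consecutivePairs.Sublist p.consecutivePairs)
    (hw : ∀ e ∈ p.consecutivePairs, 0 ≤ w e.1 e.2) : wWeight w q ≤ wWeight w p := by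
  rw [wWeight_eq_sum_consecutivePairs, wWeight_eq_sum_consecutivePairs]
  exact (h.map _).sum_le_sum <| List.forall_mem_map.mpr hw

theorem wWeight_append_tail (w : V → V → α) {l₁ l₂ : List V} (h : l₁.getLast? = l₂.head?) :
    wWeight w (l₁ ++ l₂.tail) = wWeight w l₁ + wWeight w l₂ := by
  simp only [wWeight_eq_sum_consecutivePairs, List.consecutivePairs_append_tail h, List.map_append,
    List.sum_append]

theorem exists_nodup_isWalkFrom_append [Preorder α] [AddLeftMono α] {E : V → V → Prop}
    {w : V → V → α} (hw : ∀ a b, E a b → 0 ≤ w a b) {l₁ l₂ : List V} {u v x : V}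
    (h₁ : IsWalkFrom E l₁ u v) (h₂ : IsWalkFrom E l₂ v x) :
    ∃ q : List V, q.Nodup ∧ IsWalkFrom E q u x ∧
      (∀ e ∈ q.consecutivePairs, e ∈ l₁.consecutivePairs ∨ e ∈ l₂.consecutivePairs) ∧
      wWeight w q ≤ wWeight w l₁ + wWeight w l₂ := by
  obtain ⟨hw₁, hu, hv⟩ := h₁
  obtain ⟨hw₂, hv', hx⟩ := h₂
  have hjoin : l₁.getLast? = l₂.head? := hv.trans hv'.symm
  have hpairs := List.consecutivePairs_append_tail hjoin
  have hwalk : ∀ e ∈ (l₁ ++ l₂.tail).consecutivePairs, E e.1 e.2 := by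
    simp only [hpairs, List.mem_append]
    rintro e (he | he)
    exacts [isWalk_iff_forall_mem_consecutivePairs.mp hw₁ e he,
      isWalk_iff_forall_mem_consecutivePairs.mp hw₂ e he]
  obtain ⟨q, hq, hqh, hql, hqs⟩ := List.exists_nodup_consecutivePairs_sublist (l₁ ++ l₂.tail)
  refine ⟨q, hq, ⟨?_, ?_, ?_⟩, fun e he => ?_, ?_⟩
  · exact isWalk_iff_forall_mem_consecutivePairs.mpr fun e he => hwalk e (hqs.subset he)
  · rw [hqh, List.head?_append, hu, Option.some_or]
  · rw [hql, List.getLast?_append_tail hjoin, hx]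
  · exact List.mem_append.mp (hpairs ▸ hqs.subset he)
  · rw [← wWeight_append_tail w hjoin]
    exact wWeight_le_of_consecutivePairs_sublist hqs fun e he => hw _ _ (hwalk e he)

end Walks

section CyclicSeq

variable {V α : Type*} [AddCommMonoid α]

-- The default `d` only matters for `l = []`.
def cyclicSeq (d : V) (l : List V) (j : ℕ) : V := l.getD (j % l.length) d

variable {d a b : V} {l : List V}

theorem cyclicSeq_add_length (j : ℕ) : cyclicSeq d l (j + l.length) = cyclicSeq d l j := by
  rw [cyclicSeq, cyclicSeq, Nat.add_mod_right]

theorem cyclicSeq_of_lt {j : ℕ} (hj : j < l.length) : cyclicSeq d l j = l.getD j d := by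
  rw [cyclicSeq, Nat.mod_eq_of_lt hj]

theorem cyclicSeq_injOn (hl : l.Nodup) {i j : ℕ} (hi : i < l.length) (hj : j < l.length)
    (h : cyclicSeq d l i = cyclicSeq d l j) : i = j := by
  rwa [cyclicSeq_of_lt hi, cyclicSeq_of_lt hj, List.getD_eq_getElem _ _ hi,
    List.getD_eq_getElem _ _ hj, hl.getElem_inj_iff] at h

theorem cyclicSeq_length (ha : l.head? = some a) : cyclicSeq d l l.length = a := by
  rw [cyclicSeq, Nat.mod_self, List.getD_zero_of_head?_eq ha]

theorem cyclicSeq_succ_mem_consecutivePairs (ha : l.head? = some a) (hb : l.getLast? = some b)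
    (j : ℕ) : (cyclicSeq d l j, cyclicSeq d l (j + 1)) ∈ l.consecutivePairs ∨
      (cyclicSeq d l j = b ∧ cyclicSeq d l (j + 1) = a) := by
  have hpos : 0 < l.length := by cases l <;> simp_all
  have hsucc : (j + 1) % l.length = (j % l.length + 1) % l.length := (Nat.mod_add_mod ..).symm
  have hj : j % l.length < l.length := Nat.mod_lt _ hpos
  by_cases hlt : j % l.length + 1 < l.length
  · left
    rw [cyclicSeq, cyclicSeq, hsucc, Nat.mod_eq_of_lt hlt]
    exact List.getD_mem_consecutivePairs d hlt
  · right
    have hlast : j % l.length = l.length - 1 := by omega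
    rw [cyclicSeq, cyclicSeq, hsucc, hlast, Nat.sub_add_cancel hpos, Nat.mod_self]
    exact ⟨List.getD_length_sub_one_of_getLast?_eq hb, List.getD_zero_of_head?_eq ha⟩

theorem arcW_cyclicSeq (w : V → V → α) (ha : l.head? = some a) (hb : l.getLast? = some b) :
    arcW w (cyclicSeq d l) 0 l.length = wWeight w l + w b a := by
  have hpos : 0 < l.length := by cases l <;> simp_all
  obtain ⟨n, hn⟩ : ∃ n, l.length = n + 1 := ⟨l.length - 1, by omega⟩
  simp only [arcW, zero_add]
  rw [hn, Finset.sum_range_succ, wWeight_eq_sum_range w d, hn, Nat.add_sub_cancel]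
  have hlast : cyclicSeq d l n = b := by
    rw [cyclicSeq_of_lt (by omega), show n = l.length - 1 by omega,
      List.getD_length_sub_one_of_getLast?_eq hb]
  rw [hlast, ← hn, cyclicSeq_length ha]
  congr 1
  refine Finset.sum_congr rfl fun j hj => ?_
  have := Finset.mem_range.mp hj
  rw [cyclicSeq_of_lt (by omega), cyclicSeq_of_lt (by omega)]

theorem exists_cycle_of_nodup_of_adj (w : V → V → α) {E : V → V → Prop} (hl : l.Nodup)
    (hwalk : IsWalkFrom E l a b) (hlen : 3 ≤ l.length) (hba : E b a) :
    ∃ (m : ℕ) (c : ℕ → V), 3 ≤ m ∧ (∀ j, c (j + m) = c j) ∧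
      (∀ j, E (c j) (c (j + 1))) ∧ (∀ i j, i < m → j < m → c i = c j → i = j) ∧
      (∀ j, (c j, c (j + 1)) ∈ l.consecutivePairs ∨ (c j = b ∧ c (j + 1) = a)) ∧
      arcW w c 0 m = wWeight w l + w b a := by
  obtain ⟨hE, ha, hb⟩ := hwalk
  refine ⟨l.length, cyclicSeq a l, hlen, cyclicSeq_add_length, fun j => ?_,
    fun i j => cyclicSeq_injOn hl, cyclicSeq_succ_mem_consecutivePairs ha hb,
    arcW_cyclicSeq w ha hb⟩
  rcases cyclicSeq_succ_mem_consecutivePairs (d := a) ha hb j with h | ⟨h₁, h₂⟩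
  · exact isWalk_iff_forall_mem_consecutivePairs.mp hE _ h
  · rw [h₁, h₂]
    exact hba

end CyclicSeq

theorem stmt4_general {V : Type*} (E : V → V → Prop) (w : V → V → ℝ)
    (hwpos : ∀ a b, E a b → 0 < w a b)
    (x y z y' z' : V) (hyz : y ≠ z)
    (P1 P2 : List V)
    (hP1 : IsWalkFrom E P1 y x) (hP1nd : P1.Nodup)
    (hP2 : IsWalkFrom E P2 x z) (hP2nd : P2.Nodup)
    (hy' : P1[1]? = some y') (hz' : P2.reverse[1]? = some z')
    (hy'z : y' ≠ z) (hz'y : z' ≠ y) (hzy : E z y) :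
    ∃ (m : ℕ) (c : ℕ → V), 3 ≤ m ∧ (∀ j, c (j + m) = c j) ∧
      (∀ j, E (c j) (c (j + 1))) ∧ (∀ i j, i < m → j < m → c i = c j → i = j) ∧
      (∀ j, edgeIn P1 (c j) (c (j + 1)) ∨ edgeIn P2 (c j) (c (j + 1)) ∨
        (c j = z ∧ c (j + 1) = y) ∨ (c j = y ∧ c (j + 1) = z)) ∧
      arcW w c 0 m ≤ wWeight w P1 + wWeight w P2 + w z y := by
  obtain ⟨Q, hQnd, hQ, hQedge, hQweight⟩ :=
    exists_nodup_isWalkFrom_append (fun a b h => (hwpos a b h).le) hP1 hP2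
  have hyzP1 : (y, z) ∉ P1.consecutivePairs := fun h => hy'z <| Option.some_inj.mp <|
    hy'.symm.trans (hP1nd.getElem?_one_eq_of_mem_consecutivePairs hP1.2.1 h)
  have hyzP2 : (y, z) ∉ P2.consecutivePairs := fun h => hz'y <| Option.some_inj.mp <|
    hz'.symm.trans ((List.nodup_reverse.mpr hP2nd).getElem?_one_eq_of_mem_consecutivePairs
      (List.head?_reverse.trans hP2.2.2) (List.mem_consecutivePairs_reverse.mpr h))
  have hQlen : 3 ≤ Q.length := List.three_le_length_of_not_mem_consecutivePairs hyz hQ.2.1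
    hQ.2.2 fun h => (hQedge _ h).elim hyzP1 hyzP2
  obtain ⟨m, c, hm, hper, hE, hinj, hedge, hweight⟩ :=
    exists_cycle_of_nodup_of_adj w hQnd hQ hQlen hzy
  refine ⟨m, c, hm, hper, hE, hinj, fun j => ?_, by linarith⟩
  rcases hedge j with h | h
  · exact (hQedge _ h).imp Or.inl (Or.inl ∘ Or.inl)
  · exact Or.inr (Or.inr (Or.inl h))

/-- in an undirected graph with positive edge weights, let `x, y, z` be
distinct, `P₁` a simple shortest path from `y` to `x` with second vertex `y'`,
`P₂` a simple shortest path from `x` to `z` with second-to-last vertex `z'`,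
`y' ≠ z`, `z' ≠ y`, and `(z, y) ∈ E`. Then the edge set `P₁ ∪ P₂ ∪ {(z, y)}`
contains a simple cycle (≥ 3 vertices, encoded as an injective periodic sequence whose
consecutive edges all come from `P₁`, `P₂` or `{z,y}`) of weight at most
`w(P₁) + w(P₂) + w(z, y)`. -/
theorem stmt4 {V : Type*} (E : V → V → Prop) (w : V → V → ℝ)
    (hEsym : ∀ a b, E a b → E b a) (hwsym : ∀ a b, w a b = w b a)
    (hwpos : ∀ a b, E a b → 0 < w a b)
    (x y z y' z' : V) (hxy : x ≠ y) (hxz : x ≠ z) (hyz : y ≠ z)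
    (P1 P2 : List V)
    (hP1 : IsWalkFrom E P1 y x) (hP1nd : P1.Nodup)
    (hP1min : ∀ q, IsWalkFrom E q y x → q.Nodup → wWeight w P1 ≤ wWeight w q)
    (hP2 : IsWalkFrom E P2 x z) (hP2nd : P2.Nodup)
    (hP2min : ∀ q, IsWalkFrom E q x z → q.Nodup → wWeight w P2 ≤ wWeight w q)
    (hy' : P1[1]? = some y') (hz' : P2.reverse[1]? = some z')
    (hy'z : y' ≠ z) (hz'y : z' ≠ y) (hzy : E z y) :
    ∃ (m : ℕ) (c : ℕ → V), 3 ≤ m ∧ (∀ j, c (j + m) = c j) ∧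
      (∀ j, E (c j) (c (j + 1))) ∧ (∀ i j, i < m → j < m → c i = c j → i = j) ∧
      (∀ j, edgeIn P1 (c j) (c (j + 1)) ∨ edgeIn P2 (c j) (c (j + 1)) ∨
        (c j = z ∧ c (j + 1) = y) ∨ (c j = y ∧ c (j + 1) = z)) ∧
      arcW w c 0 m ≤ wWeight w P1 + wWeight w P2 + w z y :=
  stmt4_general E w hwpos x y z y' z' hyz P1 P2 hP1 hP1nd hP2 hP2nd hy' hz' hy'z hz'y hzy
end

section
/- Consider the following reduction from minimum triangle to minimum k-cycle, for fixed k ≥ 4: given a tripartite graph G with parts V^1, V^2, V^3 and integer edge weights in [−M, M] (M ≥ 1), replace each v ∈ V^1 by a path P_v = v_1 → ... → v_{k−2} of k−2 vertices with zero-weight internal edges; for each original edge (u, v) with u ∈ V^2 put edge (u, v_1) and for each edge (v, u) with u ∈ V^3 put edge (v_{k−2}, u), each keeping its original weight; finally add 5M to the weight of every edge not internal to a path P_v. Then every k-cycle in the resulting graph G' that uses an edge of some path P_v has weight exactly W + 15M where W is the weight of a corresponding triangle of G, and every k-cycle of G' avoiding all path edges has weight at least 4kM ≥ 16M. -/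
/-- Vertices of the gadget graph `G'`: the parts `V²`, `V³` of `G`, and for every
`v ∈ V¹` a path `P_v` on `k-2` vertices `(v, 0), …, (v, k-3)`. -/
abbrev GadgetV (V1 V2 V3 : Type*) (k : ℕ) : Type _ :=
  V2 ⊕ V3 ⊕ V1 × Fin (k - 2)

/-- One orientation of the adjacency of the gadget graph `G'`:
`u ∈ V²` is joined to `z ∈ V³` iff `(u,z)` is an edge of `G`; `u ∈ V²` is joined to
the first vertex of `P_v` iff `(u,v)` is an edge of `G`; `z ∈ V³` is joined to the
last vertex of `P_v` iff `(v,z)` is an edge of `G`; consecutive vertices of each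
`P_v` are joined. -/
def gadgetAdj0 {V1 V2 V3 : Type*} (E12 : V1 → V2 → Prop) (E23 : V2 → V3 → Prop)
    (E31 : V3 → V1 → Prop) (k : ℕ) :
    GadgetV V1 V2 V3 k → GadgetV V1 V2 V3 k → Prop
  | Sum.inl u, Sum.inr (Sum.inl z) => E23 u z
  | Sum.inl u, Sum.inr (Sum.inr (v, i)) => i.val = 0 ∧ E12 v u
  | Sum.inr (Sum.inl z), Sum.inr (Sum.inr (v, i)) => i.val = k - 3 ∧ E31 z v
  | Sum.inr (Sum.inr (v, i)), Sum.inr (Sum.inr (v', j)) => v = v' ∧ j.val = i.val + 1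
  | _, _ => False

/-- The (undirected) adjacency of the gadget graph `G'`. -/
def gadgetAdj {V1 V2 V3 : Type*} (E12 : V1 → V2 → Prop) (E23 : V2 → V3 → Prop)
    (E31 : V3 → V1 → Prop) (k : ℕ) (a b : GadgetV V1 V2 V3 k) : Prop :=
  gadgetAdj0 E12 E23 E31 k a b ∨ gadgetAdj0 E12 E23 E31 k b a

/-- One orientation of the weights of `G'`: edges inherited from `G` get their
original weight increased by `5M`; path edges get weight `0`. -/
def gadgetW0 {V1 V2 V3 : Type*} (w12 : V1 → V2 → ℤ) (w23 : V2 → V3 → ℤ)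
    (w31 : V3 → V1 → ℤ) (M : ℤ) (k : ℕ) :
    GadgetV V1 V2 V3 k → GadgetV V1 V2 V3 k → ℤ
  | Sum.inl u, Sum.inr (Sum.inl z) => w23 u z + 5 * M
  | Sum.inl u, Sum.inr (Sum.inr (v, _)) => w12 v u + 5 * M
  | Sum.inr (Sum.inl z), Sum.inr (Sum.inr (v, _)) => w31 z v + 5 * M
  | _, _ => 0

/-- The symmetric weight function of `G'` (on each edge exactly one orientation of
`gadgetW0` is nonzero, so this sum is the weight of the edge). -/
def gadgetW {V1 V2 V3 : Type*} (w12 : V1 → V2 → ℤ) (w23 : V2 → V3 → ℤ)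
    (w31 : V3 → V1 → ℤ) (M : ℤ) (k : ℕ) (a b : GadgetV V1 V2 V3 k) : ℤ :=
  gadgetW0 w12 w23 w31 M k a b + gadgetW0 w12 w23 w31 M k b a

/-- `{a, b}` is an edge internal to some path `P_v`. -/
def PathEdge {V1 V2 V3 : Type*} {k : ℕ} (a b : GadgetV V1 V2 V3 k) : Prop :=
  ∃ (v : V1) (i j : Fin (k - 2)),
    a = Sum.inr (Sum.inr (v, i)) ∧ b = Sum.inr (Sum.inr (v, j))


section Helper
variable {V1 V2 V3 : Type*}

def pvx {k : ℕ} (h : 0 < k - 2) (v : V1) (m : ℕ) : GadgetV V1 V2 V3 k :=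
  Sum.inr (Sum.inr (v, ⟨m % (k - 2), Nat.mod_lt _ h⟩))

lemma pvx_val {k : ℕ} (h : 0 < k - 2) (v : V1) (i : Fin (k - 2)) :
    (Sum.inr (Sum.inr (v, i)) : GadgetV V1 V2 V3 k) = pvx h v i.val := by
  simp [pvx, Nat.mod_eq_of_lt i.isLt]

lemma pvx_inj {k : ℕ} (h : 0 < k - 2) {v v' : V1} {m m' : ℕ}
    (hm : m < k - 2) (hm' : m' < k - 2)
    (he : (pvx h v m : GadgetV V1 V2 V3 k) = pvx h v' m') : v = v' ∧ m = m' := by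
  simp [pvx, Nat.mod_eq_of_lt hm, Nat.mod_eq_of_lt hm', Fin.ext_iff, Prod.ext_iff] at he
  exact he

variable (w12 : V1 → V2 → ℤ) (w23 : V2 → V3 → ℤ) (w31 : V3 → V1 → ℤ) (M : ℤ) {k : ℕ}

lemma gW_up (h : 0 < k - 2) (u : V2) (v : V1) (m : ℕ) :
    gadgetW w12 w23 w31 M k (Sum.inl u) (pvx h v m) = w12 v u + 5 * M := by
  simp [gadgetW, gadgetW0, pvx]

lemma gW_pu (h : 0 < k - 2) (u : V2) (v : V1) (m : ℕ) :
    gadgetW w12 w23 w31 M k (pvx h v m) (Sum.inl u) = w12 v u + 5 * M := by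
  simp [gadgetW, gadgetW0, pvx]

lemma gW_zp (h : 0 < k - 2) (z : V3) (v : V1) (m : ℕ) :
    gadgetW w12 w23 w31 M k (Sum.inr (Sum.inl z)) (pvx h v m) = w31 z v + 5 * M := by
  simp [gadgetW, gadgetW0, pvx]

lemma gW_pz (h : 0 < k - 2) (z : V3) (v : V1) (m : ℕ) :
    gadgetW w12 w23 w31 M k (pvx h v m) (Sum.inr (Sum.inl z)) = w31 z v + 5 * M := by
  simp [gadgetW, gadgetW0, pvx]

lemma gW_uz (u : V2) (z : V3) :
    gadgetW w12 w23 w31 M k (Sum.inl u) (Sum.inr (Sum.inl z)) = w23 u z + 5 * M := by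
  simp [gadgetW, gadgetW0]

lemma gW_zu (u : V2) (z : V3) :
    gadgetW w12 w23 w31 M k (Sum.inr (Sum.inl z)) (Sum.inl u) = w23 u z + 5 * M := by
  simp [gadgetW, gadgetW0]

lemma gW_pp (h : 0 < k - 2) (v v' : V1) (m m' : ℕ) :
    gadgetW w12 w23 w31 M k (pvx h v m) (pvx h v' m') = 0 := by
  simp [gadgetW, gadgetW0, pvx]

end Helper

lemma nbrPv {V1 V2 V3 : Type*} {E12 : V1 → V2 → Prop} {E23 : V2 → V3 → Prop}
    {E31 : V3 → V1 → Prop} {k : ℕ} (h : 0 < k - 2)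
    (x : GadgetV V1 V2 V3 k) (v : V1) (m : ℕ) (hm : m < k - 2)
    (hx : gadgetAdj E12 E23 E31 k x (pvx h v m) ∨ gadgetAdj E12 E23 E31 k (pvx h v m) x) :
    (m = 0 ∧ ∃ u, x = Sum.inl u ∧ E12 v u) ∨
    (m = k - 3 ∧ ∃ z, x = Sum.inr (Sum.inl z) ∧ E31 z v) ∨
    (∃ m', m' < k - 2 ∧ x = pvx h v m' ∧ (m' = m + 1 ∨ m = m' + 1)) := by
  have hx' : gadgetAdj0 E12 E23 E31 k x (pvx h v m) ∨ gadgetAdj0 E12 E23 E31 k (pvx h v m) x := by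
    rcases hx with (h1 | h1) | (h1 | h1)
    · exact Or.inl h1
    · exact Or.inr h1
    · exact Or.inr h1
    · exact Or.inl h1
  rcases x with u | z | ⟨v', j⟩
  · rcases hx' with h1 | h1
    · simp only [pvx, gadgetAdj0, Nat.mod_eq_of_lt hm] at h1
      exact Or.inl ⟨h1.1, u, rfl, h1.2⟩
    · simp only [pvx, gadgetAdj0] at h1
  · rcases hx' with h1 | h1
    · simp only [pvx, gadgetAdj0, Nat.mod_eq_of_lt hm] at h1
      exact Or.inr (Or.inl ⟨h1.1, z, rfl, h1.2⟩)
    · simp only [pvx, gadgetAdj0] at h1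
  · rcases hx' with h1 | h1
    · simp only [pvx, gadgetAdj0, Nat.mod_eq_of_lt hm] at h1
      refine Or.inr (Or.inr ⟨j.val, j.isLt, ?_, Or.inr h1.2⟩)
      rw [pvx_val h v' j, h1.1]
    · simp only [pvx, gadgetAdj0, Nat.mod_eq_of_lt hm] at h1
      refine Or.inr (Or.inr ⟨j.val, j.isLt, ?_, Or.inl h1.2⟩)
      rw [pvx_val h v' j, ← h1.1]

lemma sumSplit {k : ℕ} (hk : 4 ≤ k) (f : ℕ → ℤ) (hmid : ∀ j, 1 ≤ j → j ≤ k - 3 → f j = 0) :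
    ∑ j ∈ Finset.range k, f j = f 0 + f (k - 2) + f (k - 1) := by
  obtain ⟨n, rfl⟩ : ∃ n, k = n + 3 := ⟨k - 3, by omega⟩
  rw [Finset.sum_range_succ, Finset.sum_range_succ, Finset.sum_range_succ']
  have hz : ∑ j ∈ Finset.range n, f (j + 1) = 0 := by
    apply Finset.sum_eq_zero
    intro j hj
    simp only [Finset.mem_range] at hj
    exact hmid (j + 1) (by omega) (by omega)
  have e2 : n + 3 - 2 = n + 1 := by omega
  have e3 : n + 3 - 1 = n + 2 := by omega
  rw [hz, e2, e3]; ring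

lemma arcW_shift {V : Type*} (w : V → V → ℤ) (c : ℕ → V) (k : ℕ)
    (hper : ∀ j, c (j + k) = c j) (a : ℕ) :
    arcW w c a k = arcW w c 0 k := by
  induction a with
  | zero => rfl
  | succ n ih =>
    rw [← ih]
    have e1 : arcW w c (n + 1) k = ∑ j ∈ Finset.range k, w (c (n + (j + 1))) (c (n + (j + 1) + 1)) := by
      unfold arcW
      apply Finset.sum_congr rfl
      intro j _
      have h1 : n + 1 + j = n + (j + 1) := by omega
      rw [h1]
    have e2 : ∑ j ∈ Finset.range (k + 1), w (c (n + j)) (c (n + j + 1)) =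
        ∑ j ∈ Finset.range k, w (c (n + (j + 1))) (c (n + (j + 1) + 1)) + w (c (n + 0)) (c (n + 0 + 1)) :=
      Finset.sum_range_succ' _ k
    have e3 : ∑ j ∈ Finset.range (k + 1), w (c (n + j)) (c (n + j + 1)) =
        ∑ j ∈ Finset.range k, w (c (n + j)) (c (n + j + 1)) + w (c (n + k)) (c (n + k + 1)) :=
      Finset.sum_range_succ _ k
    have e4 : w (c (n + k)) (c (n + k + 1)) = w (c (n + 0)) (c (n + 0 + 1)) := by
      have h1 : n + k = n + k := rfl
      have h2 : n + k + 1 = (n + 1) + k := by omega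
      rw [h2, hper (n + 1), hper n]
      simp
    rw [e1]
    unfold arcW
    omega

lemma edge_lb {V1 V2 V3 : Type*} {E12 : V1 → V2 → Prop} {E23 : V2 → V3 → Prop}
    {E31 : V3 → V1 → Prop} {w12 : V1 → V2 → ℤ} {w23 : V2 → V3 → ℤ} {w31 : V3 → V1 → ℤ}
    {M : ℤ} {k : ℕ} (hM : 1 ≤ M)
    (hb12 : ∀ v u, E12 v u → -M ≤ w12 v u ∧ w12 v u ≤ M)
    (hb23 : ∀ u z, E23 u z → -M ≤ w23 u z ∧ w23 u z ≤ M)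
    (hb31 : ∀ z v, E31 z v → -M ≤ w31 z v ∧ w31 z v ≤ M)
    (a b : GadgetV V1 V2 V3 k)
    (hadj : gadgetAdj E12 E23 E31 k a b) (hnp : ¬ PathEdge a b) :
    4 * M ≤ gadgetW w12 w23 w31 M k a b := by
  rcases a with u | z | ⟨v, i⟩ <;> rcases b with u' | z' | ⟨v', i'⟩ <;>
      simp only [gadgetAdj, gadgetAdj0, gadgetW, gadgetW0, or_false, false_or] at hadj ⊢
  · have := hb23 u z' hadj
    linarith
  · have := hb12 v' u hadj.2
    linarith
  · have := hb23 u' z hadj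
    linarith
  · have := hb31 z v' hadj.2
    linarith
  · have := hb12 v u' hadj.2
    linarith
  · have := hb31 z' v hadj.2
    linarith
  · exfalso
    apply hnp
    rcases hadj with h1 | h1
    · exact ⟨v, i, i', rfl, by rw [← h1.1]⟩
    · exact ⟨v, i, i', rfl, by rw [h1.1]⟩

/-- for the gadget reduction (tripartite `G` with parts `V¹,V²,V³`,
integer weights in `[-M, M]`, `M ≥ 1`, `k ≥ 4`): every `k`-cycle of `G'` (an
injective `k`-periodic sequence of adjacent vertices) that uses an edge of some path
`P_v` has weight exactly `W + 15M`, where `W` is the weight of a corresponding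
triangle of `G`; and every `k`-cycle avoiding all path edges has weight at least
`4kM ≥ 16M`. -/
theorem stmt10 {V1 V2 V3 : Type*} (E12 : V1 → V2 → Prop) (E23 : V2 → V3 → Prop)
    (E31 : V3 → V1 → Prop) (w12 : V1 → V2 → ℤ) (w23 : V2 → V3 → ℤ)
    (w31 : V3 → V1 → ℤ) (M : ℤ) (k : ℕ) (hk : 4 ≤ k) (hM : 1 ≤ M)
    (hb12 : ∀ v u, E12 v u → -M ≤ w12 v u ∧ w12 v u ≤ M)
    (hb23 : ∀ u z, E23 u z → -M ≤ w23 u z ∧ w23 u z ≤ M)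
    (hb31 : ∀ z v, E31 z v → -M ≤ w31 z v ∧ w31 z v ≤ M) :
    (∀ c : ℕ → GadgetV V1 V2 V3 k,
      (∀ j, c (j + k) = c j) →
      (∀ j, gadgetAdj E12 E23 E31 k (c j) (c (j + 1))) →
      (∀ i j, i < k → j < k → c i = c j → i = j) →
      (∃ j, PathEdge (c j) (c (j + 1))) →
      ∃ (v : V1) (u : V2) (z : V3), E12 v u ∧ E23 u z ∧ E31 z v ∧
        arcW (gadgetW w12 w23 w31 M k) c 0 k =
          (w12 v u + w23 u z + w31 z v) + 15 * M) ∧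
    (∀ c : ℕ → GadgetV V1 V2 V3 k,
      (∀ j, c (j + k) = c j) →
      (∀ j, gadgetAdj E12 E23 E31 k (c j) (c (j + 1))) →
      (∀ i j, i < k → j < k → c i = c j → i = j) →
      (∀ j, ¬ PathEdge (c j) (c (j + 1))) →
      4 * (k : ℤ) * M ≤ arcW (gadgetW w12 w23 w31 M k) c 0 k) ∧
    16 * M ≤ 4 * (k : ℤ) * M := by
  refine ⟨?_, ?_, ?_⟩
  · -- part 1
    intro c hper hadj hinj hpe
    obtain ⟨j0, hpe⟩ := hpe
    have hk2 : 0 < k - 2 := by omega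
    have hmul : ∀ q j, c (j + q * k) = c j := by
      intro q
      induction q with
      | zero => intro j; simp
      | succ n ih =>
        intro j
        have e : j + (n + 1) * k = j + n * k + k := by ring
        rw [e, hper, ih]
    have hmodc : ∀ j, c j = c (j % k) := by
      intro j
      conv_lhs => rw [← Nat.mod_add_div' j k]
      exact hmul (j / k) (j % k)
    have hne : ∀ a b, a < b → b < a + k → c a ≠ c b := by
      intro a b h1 h2 he
      have h3 : c (a % k) = c (b % k) := by rw [← hmodc, ← hmodc, he]
      have hk0 : 0 < k := by omega
      have h4 := hinj (a % k) (b % k) (Nat.mod_lt _ hk0) (Nat.mod_lt _ hk0) h3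
      have h5 : a ≡ b [MOD k] := h4
      have h6 : k ∣ b - a := (Nat.modEq_iff_dvd' (le_of_lt h1)).mp h5
      have h7 := Nat.le_of_dvd (by omega) h6
      omega
    -- forward increasing run
    have runUp : ∀ (v : V1) (a t : ℕ), c t = pvx hk2 v a → c (t + 1) = pvx hk2 v (a + 1) →
        ∀ s, a + 1 + s ≤ k - 3 →
        c (t + s) = pvx hk2 v (a + s) ∧ c (t + s + 1) = pvx hk2 v (a + s + 1) := by
      intro v a t h0 h1 s
      induction s with
      | zero => intro _; exact ⟨h0, h1⟩
      | succ n ih =>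
        intro hs
        obtain ⟨p0, p1⟩ := ih (by omega)
        have h := hadj (t + n + 1)
        rw [p1] at h
        have hnb := nbrPv hk2 (c (t + n + 1 + 1)) v (a + n + 1) (by omega) (Or.inr h)
        rcases hnb with ⟨h2, _⟩ | ⟨h2, _⟩ | ⟨m', hm', hx, hc | hc⟩
        · omega
        · omega
        · refine ⟨p1, ?_⟩
          rw [show a + (n + 1) + 1 = m' from by omega] at *
          exact hx
        · exfalso
          apply hne (t + n) (t + n + 1 + 1) (by omega) (by omega)
          rw [p0, hx, show m' = a + n from by omega]
    -- forward decreasing run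
    have runDownF : ∀ (v : V1) (a t : ℕ), a + 1 ≤ k - 3 →
        c t = pvx hk2 v (a + 1) → c (t + 1) = pvx hk2 v a →
        ∀ s, s ≤ a →
        c (t + s) = pvx hk2 v (a + 1 - s) ∧ c (t + s + 1) = pvx hk2 v (a - s) := by
      intro v a t ha h0 h1 s
      induction s with
      | zero => intro _; exact ⟨h0, h1⟩
      | succ n ih =>
        intro hs
        obtain ⟨p0, p1⟩ := ih (by omega)
        have h := hadj (t + n + 1)
        rw [p1] at h
        have hnb := nbrPv hk2 (c (t + n + 1 + 1)) v (a - n) (by omega) (Or.inr h)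
        rcases hnb with ⟨h2, _⟩ | ⟨h2, _⟩ | ⟨m', hm', hx, hc | hc⟩
        · omega
        · omega
        · exfalso
          apply hne (t + n) (t + n + 1 + 1) (by omega) (by omega)
          rw [p0, hx, show m' = a + 1 - n from by omega]
        · constructor
          · rw [show a + 1 - (n + 1) = a - n from by omega]
            exact p1
          · rw [show a - (n + 1) = m' from by omega]
            exact hx
    -- backward increasing run (cycle goes down forward, so up backward)
    have runUpB : ∀ (v : V1) (a t : ℕ), k ≤ t →
        c t = pvx hk2 v (a + 1) → c (t + 1) = pvx hk2 v a →
        ∀ s, a + 1 + s ≤ k - 3 →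
        c (t - s) = pvx hk2 v (a + 1 + s) ∧ c (t - s + 1) = pvx hk2 v (a + s) := by
      intro v a t htk h0 h1 s
      induction s with
      | zero => intro _; exact ⟨h0, h1⟩
      | succ n ih =>
        intro hs
        obtain ⟨p0, p1⟩ := ih (by omega)
        have h := hadj (t - n - 1)
        rw [show t - n - 1 + 1 = t - n from by omega, p0] at h
        have hnb := nbrPv hk2 (c (t - n - 1)) v (a + 1 + n) (by omega) (Or.inl h)
        rcases hnb with ⟨h2, _⟩ | ⟨h2, _⟩ | ⟨m', hm', hx, hc | hc⟩
        · omega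
        · omega
        · constructor
          · rw [show t - (n + 1) = t - n - 1 from by omega,
              show a + 1 + (n + 1) = m' from by omega]
            exact hx
          · rw [show t - (n + 1) + 1 = t - n from by omega,
              show a + (n + 1) = a + 1 + n from by omega]
            exact p0
        · exfalso
          apply hne (t - n - 1) (t - n + 1) (by omega) (by omega)
          rw [p1, hx, show m' = a + n from by omega]
    -- backward decreasing run
    have runDownB : ∀ (v : V1) (a t : ℕ), k ≤ t → a + 1 ≤ k - 3 →
        c t = pvx hk2 v a → c (t + 1) = pvx hk2 v (a + 1) →
        ∀ s, s ≤ a →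
        c (t - s) = pvx hk2 v (a - s) ∧ c (t - s + 1) = pvx hk2 v (a - s + 1) := by
      intro v a t htk ha h0 h1 s
      induction s with
      | zero => intro _; exact ⟨h0, h1⟩
      | succ n ih =>
        intro hs
        obtain ⟨p0, p1⟩ := ih (by omega)
        have h := hadj (t - n - 1)
        rw [show t - n - 1 + 1 = t - n from by omega, p0] at h
        have hnb := nbrPv hk2 (c (t - n - 1)) v (a - n) (by omega) (Or.inl h)
        rcases hnb with ⟨h2, _⟩ | ⟨h2, _⟩ | ⟨m', hm', hx, hc | hc⟩
        · omega
        · omega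
        · exfalso
          apply hne (t - n - 1) (t - n + 1) (by omega) (by omega)
          rw [p1, hx, show m' = a - n + 1 from by omega]
        · constructor
          · rw [show t - (n + 1) = t - n - 1 from by omega,
              show a - (n + 1) = m' from by omega]
            exact hx
          · rw [show t - (n + 1) + 1 = t - n from by omega,
              show a - (n + 1) + 1 = a - n from by omega]
            exact p0
    -- the final weight computation given the structure of the cycle
    have final : ∀ (q : ℕ) (X0 X1 X2 : ℤ),
        gadgetW w12 w23 w31 M k (c q) (c (q + 1)) = X0 →
        (∀ j, 1 ≤ j → j ≤ k - 3 → gadgetW w12 w23 w31 M k (c (q + j)) (c (q + j + 1)) = 0) →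
        gadgetW w12 w23 w31 M k (c (q + (k - 2))) (c (q + (k - 2) + 1)) = X1 →
        gadgetW w12 w23 w31 M k (c (q + (k - 1))) (c (q + (k - 1) + 1)) = X2 →
        arcW (gadgetW w12 w23 w31 M k) c 0 k = X0 + X1 + X2 := by
      intro q X0 X1 X2 h0 hmid h1 h2
      rw [← arcW_shift (gadgetW w12 w23 w31 M k) c k hper q]
      unfold arcW
      rw [sumSplit hk (fun j => gadgetW w12 w23 w31 M k (c (q + j)) (c (q + j + 1))) hmid]
      simp only [Nat.add_zero]
      rw [h0, h1, h2]
    -- extract the path edge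
    obtain ⟨v, i, jj, hci, hcj⟩ := hpe
    have hct : c (j0 + k) = pvx hk2 v i.val := by rw [hper j0, hci, pvx_val]
    have hct1 : c (j0 + k + 1) = pvx hk2 v jj.val := by
      rw [show j0 + k + 1 = (j0 + 1) + k from by omega, hper (j0 + 1), hcj, pvx_val]
    have htk : k ≤ j0 + k := by omega
    have hstep := hadj (j0 + k)
    rw [hct, hct1] at hstep
    have hstep' : (jj.val = i.val + 1) ∨ (i.val = jj.val + 1) := by
      rcases hstep with h1 | h1 <;>
        simp only [pvx, gadgetAdj0, Nat.mod_eq_of_lt i.isLt, Nat.mod_eq_of_lt jj.isLt] at h1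
      · exact Or.inl h1.2
      · exact Or.inr h1.2
    rcases hstep' with hA | hB
    · -- Case A : increasing
      set a := i.val with hadef
      have ha : a + 1 ≤ k - 3 := by have := jj.isLt; omega
      have hct1' : c (j0 + k + 1) = pvx hk2 v (a + 1) := by rw [hct1, hA]
      set t0 := j0 + k - a with ht0def
      have ht0 : 4 ≤ t0 ∧ t0 + a = j0 + k := by constructor <;> omega
      have hcov : ∀ m, m ≤ k - 3 → c (t0 + m) = pvx hk2 v m := by
        intro m hm
        rcases le_or_gt m a with h | h
        · have h2 := (runDownB v a (j0 + k) htk ha hct hct1' (a - m) (by omega)).1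
          rw [show j0 + k - (a - m) = t0 + m from by omega,
            show a - (a - m) = m from by omega] at h2
          exact h2
        · have h2 := (runUp v a (j0 + k) hct hct1' (m - a - 1) (by omega)).2
          rw [show j0 + k + (m - a - 1) + 1 = t0 + m from by omega,
            show a + (m - a - 1) + 1 = m from by omega] at h2
          exact h2
      have hc0 : c t0 = pvx hk2 v 0 := by
        have := hcov 0 (by omega); simpa using this
      have hu : ∃ u, c (t0 - 1) = Sum.inl u ∧ E12 v u := by
        have h := hadj (t0 - 1)
        rw [show t0 - 1 + 1 = t0 from by omega, hc0] at h
        have hnb := nbrPv hk2 (c (t0 - 1)) v 0 (by omega) (Or.inl h)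
        rcases hnb with ⟨h2, u, hxu, hE⟩ | ⟨h2, _⟩ | ⟨m', hm', hx, hc | hc⟩
        · exact ⟨u, hxu, hE⟩
        · omega
        · exfalso
          apply hne (t0 - 1) (t0 + 1) (by omega) (by omega)
          rw [hx, show m' = 1 from by omega, hcov 1 (by omega)]
        · omega
      obtain ⟨u, hcu, hE12v⟩ := hu
      have hz : ∃ z, c (t0 + (k - 3) + 1) = Sum.inr (Sum.inl z) ∧ E31 z v := by
        have h := hadj (t0 + (k - 3))
        rw [hcov (k - 3) le_rfl] at h
        have hnb := nbrPv hk2 (c (t0 + (k - 3) + 1)) v (k - 3) (by omega) (Or.inr h)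
        rcases hnb with ⟨h2, _⟩ | ⟨h2, z, hxz, hE⟩ | ⟨m', hm', hx, hc | hc⟩
        · omega
        · exact ⟨z, hxz, hE⟩
        · omega
        · exfalso
          apply hne (t0 + (k - 4)) (t0 + (k - 3) + 1) (by omega) (by omega)
          rw [hcov (k - 4) (by omega), hx, show m' = k - 4 from by omega]
      obtain ⟨z, hcz, hE31v⟩ := hz
      have hcu2 : c (t0 + (k - 3) + 2) = Sum.inl u := by
        rw [show t0 + (k - 3) + 2 = (t0 - 1) + k from by omega, hper, hcu]
      have hE23uz : E23 u z := by
        have h := hadj (t0 + (k - 3) + 1)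
        rw [show t0 + (k - 3) + 1 + 1 = t0 + (k - 3) + 2 from by omega, hcz, hcu2] at h
        simpa only [gadgetAdj, gadgetAdj0, false_or] using h
      refine ⟨v, u, z, hE12v, hE23uz, hE31v, ?_⟩
      have hfin := final (t0 - 1) (w12 v u + 5 * M) (w31 z v + 5 * M) (w23 u z + 5 * M)
        (by rw [show t0 - 1 + 1 = t0 from by omega, hcu, hc0, gW_up])
        (by
          intro j hj1 hj2
          rw [show t0 - 1 + j = t0 + (j - 1) from by omega, hcov (j - 1) (by omega),
            show t0 + (j - 1) + 1 = t0 + j from by omega, hcov j (by omega), gW_pp])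
        (by rw [show t0 - 1 + (k - 2) = t0 + (k - 3) from by omega, hcov (k - 3) le_rfl,
            show t0 + (k - 3) + 1 = t0 + (k - 3) + 1 from rfl, hcz, gW_pz])
        (by rw [show t0 - 1 + (k - 1) = t0 + (k - 3) + 1 from by omega, hcz,
            show t0 + (k - 3) + 1 + 1 = t0 + (k - 3) + 2 from by omega, hcu2, gW_zu])
      rw [hfin]; ring
    · -- Case B : decreasing
      set a := jj.val with hadef
      have ha : a + 1 ≤ k - 3 := by have := i.isLt; omega
      have hct' : c (j0 + k) = pvx hk2 v (a + 1) := by rw [hct, hB]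
      set t0 := j0 + k - (k - 4 - a) with ht0def
      have ht0 : 4 ≤ t0 := by omega
      have hcov : ∀ m, m ≤ k - 3 → c (t0 + m) = pvx hk2 v (k - 3 - m) := by
        intro m hm
        rcases le_or_gt m (k - 4 - a) with h | h
        · have h2 := (runUpB v a (j0 + k) htk hct' hct1 (k - 4 - a - m) (by omega)).1
          rw [show j0 + k - (k - 4 - a - m) = t0 + m from by omega,
            show a + 1 + (k - 4 - a - m) = k - 3 - m from by omega] at h2
          exact h2
        · have h2 := (runDownF v a (j0 + k) ha hct' hct1 (m - (k - 3 - a)) (by omega)).2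
          rw [show j0 + k + (m - (k - 3 - a)) + 1 = t0 + m from by omega,
            show a - (m - (k - 3 - a)) = k - 3 - m from by omega] at h2
          exact h2
      have hc0 : c t0 = pvx hk2 v (k - 3) := by
        have := hcov 0 (by omega); simpa using this
      have hz : ∃ z, c (t0 - 1) = Sum.inr (Sum.inl z) ∧ E31 z v := by
        have h := hadj (t0 - 1)
        rw [show t0 - 1 + 1 = t0 from by omega, hc0] at h
        have hnb := nbrPv hk2 (c (t0 - 1)) v (k - 3) (by omega) (Or.inl h)
        rcases hnb with ⟨h2, _⟩ | ⟨h2, z, hxz, hE⟩ | ⟨m', hm', hx, hc | hc⟩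
        · omega
        · exact ⟨z, hxz, hE⟩
        · omega
        · exfalso
          apply hne (t0 - 1) (t0 + 1) (by omega) (by omega)
          rw [hx, show m' = k - 4 from by omega, ← show k - 3 - 1 = k - 4 from by omega,
            hcov 1 (by omega)]
      obtain ⟨z, hcz, hE31v⟩ := hz
      have hck3 : c (t0 + (k - 3)) = pvx hk2 v 0 := by
        rw [hcov (k - 3) le_rfl, show k - 3 - (k - 3) = 0 from by omega]
      have hu : ∃ u, c (t0 + (k - 3) + 1) = Sum.inl u ∧ E12 v u := by
        have h := hadj (t0 + (k - 3))
        rw [hck3] at h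
        have hnb := nbrPv hk2 (c (t0 + (k - 3) + 1)) v 0 (by omega) (Or.inr h)
        rcases hnb with ⟨h2, u, hxu, hE⟩ | ⟨h2, _⟩ | ⟨m', hm', hx, hc | hc⟩
        · exact ⟨u, hxu, hE⟩
        · omega
        · exfalso
          apply hne (t0 + (k - 4)) (t0 + (k - 3) + 1) (by omega) (by omega)
          rw [hcov (k - 4) (by omega), hx, show m' = 1 from by omega,
            show k - 3 - (k - 4) = 1 from by omega]
        · omega
      obtain ⟨u, hcu, hE12v⟩ := hu
      have hcz2 : c (t0 + (k - 3) + 2) = Sum.inr (Sum.inl z) := by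
        rw [show t0 + (k - 3) + 2 = (t0 - 1) + k from by omega, hper, hcz]
      have hE23uz : E23 u z := by
        have h := hadj (t0 + (k - 3) + 1)
        rw [show t0 + (k - 3) + 1 + 1 = t0 + (k - 3) + 2 from by omega, hcu, hcz2] at h
        simpa only [gadgetAdj, gadgetAdj0, or_false] using h
      refine ⟨v, u, z, hE12v, hE23uz, hE31v, ?_⟩
      have hfin := final (t0 - 1) (w31 z v + 5 * M) (w12 v u + 5 * M) (w23 u z + 5 * M)
        (by rw [show t0 - 1 + 1 = t0 from by omega, hcz, hc0, gW_zp])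
        (by
          intro j hj1 hj2
          rw [show t0 - 1 + j = t0 + (j - 1) from by omega, hcov (j - 1) (by omega),
            show t0 + (j - 1) + 1 = t0 + j from by omega, hcov j (by omega), gW_pp])
        (by rw [show t0 - 1 + (k - 2) = t0 + (k - 3) from by omega, hck3,
            hcu, gW_pu])
        (by rw [show t0 - 1 + (k - 1) = t0 + (k - 3) + 1 from by omega, hcu,
            show t0 + (k - 3) + 1 + 1 = t0 + (k - 3) + 2 from by omega, hcz2, gW_uz])
      rw [hfin]; ring
  · -- part 2
    intro c hper hadj hinj hnp
    have harc : arcW (gadgetW w12 w23 w31 M k) c 0 k =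
        ∑ j ∈ Finset.range k, gadgetW w12 w23 w31 M k (c j) (c (j + 1)) := by
      unfold arcW
      apply Finset.sum_congr rfl
      intro j _
      rw [Nat.zero_add]
    rw [harc]
    calc 4 * (k : ℤ) * M = ∑ _j ∈ Finset.range k, 4 * M := by
          rw [Finset.sum_const, Finset.card_range, nsmul_eq_mul]; ring
      _ ≤ ∑ j ∈ Finset.range k, gadgetW w12 w23 w31 M k (c j) (c (j + 1)) := by
          apply Finset.sum_le_sum
          intro j _
          exact edge_lb hM hb12 hb23 hb31 _ _ (hadj j) (hnp j)
  · -- part 3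
    have h4 : (4 : ℤ) ≤ (k : ℤ) := by exact_mod_cast hk
    nlinarith
end

section
/- Let t and M be positive integers, and suppose a minimum-weight simple cycle C in a directed graph with weights in {−M, ..., M} and no negative cycles satisfies t ≤ ⌊w(C)/2⌋ and w(C) ≤ 2t + M. Then for any vertex s on C with critical edge (v_i, v_{i+1}), both distances d_C[s, v_i] and d_C[v_{i+1}, s] lie in the interval [t − M, t + M/2]. -/
/-- let `t, M` be positive integers and let `C` (the injective
`ℓ`-periodic sequence `v`) be a minimum-weight simple cycle, of weight
`wC = arcW w v 0 ℓ ≥ 0`, in a directed graph with integer weights in `{-M, …, M}` and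
no negative cycles, with `t ≤ ⌊wC/2⌋` and `wC ≤ 2t + M`. Then for any vertex
`s = v a` on `C` with critical edge `(v (a+k), v (a+k+1))` (i.e.
`⌈wC/2⌉ − w(e) ≤ d_C[s,v_i] ≤ ⌊wC/2⌋` and `⌈wC/2⌉ − w(e) ≤ d_C[v_{i+1},s] ≤ ⌊wC/2⌋`),
both `d_C[s, v_i]` and `d_C[v_{i+1}, s]` lie in the interval `[t − M, t + M/2]`. -/
theorem stmt14 {V : Type*} (E : V → V → Prop) (w : V → V → ℤ) (M t : ℤ)
    (hM : 1 ≤ M) (ht1 : 1 ≤ t)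
    (ℓ : ℕ) (v : ℕ → V) (hℓ : 1 ≤ ℓ)
    (hper : ∀ j, v (j + ℓ) = v j)
    (hedge : ∀ j, E (v j) (v (j + 1)))
    (hinj : ∀ i j, i < ℓ → j < ℓ → v i = v j → i = j)
    (hwb : ∀ p q, E p q → -M ≤ w p q ∧ w p q ≤ M)
    (hwC0 : 0 ≤ arcW w v 0 ℓ)
    (hmin : ∀ (m : ℕ) (u : ℕ → V), 1 ≤ m → (∀ j, u (j + m) = u j) →
      (∀ j, E (u j) (u (j + 1))) → (∀ i j, i < m → j < m → u i = u j → i = j) →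
      arcW w v 0 ℓ ≤ arcW w u 0 m)
    (ht : t ≤ arcW w v 0 ℓ / 2) (htM : arcW w v 0 ℓ ≤ 2 * t + M)
    (a k : ℕ) (hk : k < ℓ)
    (hc1l : (arcW w v 0 ℓ + 1) / 2 - w (v (a + k)) (v (a + k + 1)) ≤ arcW w v a k)
    (hc1u : arcW w v a k ≤ arcW w v 0 ℓ / 2)
    (hc2l : (arcW w v 0 ℓ + 1) / 2 - w (v (a + k)) (v (a + k + 1)) ≤
      arcW w v (a + k + 1) (ℓ - (k + 1)))
    (hc2u : arcW w v (a + k + 1) (ℓ - (k + 1)) ≤ arcW w v 0 ℓ / 2) :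
    (t - M ≤ arcW w v a k ∧ ((arcW w v a k : ℤ) : ℚ) ≤ (t : ℚ) + (M : ℚ) / 2) ∧
    (t - M ≤ arcW w v (a + k + 1) (ℓ - (k + 1)) ∧
      ((arcW w v (a + k + 1) (ℓ - (k + 1)) : ℤ) : ℚ) ≤ (t : ℚ) + (M : ℚ) / 2) := by
  obtain ⟨hel, heu⟩ := hwb _ _ (hedge (a + k))
  have h1 : 2 * arcW w v a k ≤ 2 * t + M := by omega
  have h2 : 2 * arcW w v (a + k + 1) (ℓ - (k + 1)) ≤ 2 * t + M := by omega
  refine ⟨⟨by omega, ?_⟩, by omega, ?_⟩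
  · have := (@Int.cast_le ℚ _ _ _).2 h1
    push_cast at this
    linarith
  · have := (@Int.cast_le ℚ _ _ _).2 h2
    push_cast at this
    linarith
end

section
/- Let P be a walk in an undirected graph with positive edge weights that is the concatenation of two simple paths P_1 (from y to x) and P_2 (from x to z), where P_2 is a subpath of the reverse of P_1, together with an edge (z, y) ∈ E, and where the vertex after y on P_1 is different from z. Then P_1 together with edge (z, y) contains a simple cycle (on at least 3 vertices) of weight strictly less than w(P_1) + w(P_2) + w(z, y). -/
/-!
Since `P₂` runs inside `P₁`, the vertex `z` lies on `P₁`, at some index `k ≥ 2` because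
`P₁` starts with `y, y'` and both differ from `z`. The prefix `P₁[0..k]` from `y` to `z`,
closed by the edge `(z, y)`, is a simple cycle on `k + 1 ≥ 3` vertices of weight at most
`w(P₁) + w(z, y)`, and `w(P₂) > 0` because `P₂` joins the distinct vertices `x` and `z`.
-/

section

open Finset

variable {V α : Type*} {E : V → V → Prop}

theorem isWalk_iff_isChain : ∀ {p : List V}, IsWalk E p ↔ p.IsChain E
  | [] | [_] => by simp [IsWalk]
  | _ :: _ :: _ => by simp [IsWalk, isWalk_iff_isChain]

theorem IsWalk.adj_getD {p : List V} (hp : IsWalk E p) (d : V) {i : ℕ}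
    (hi : i + 1 < p.length) : E (p.getD i d) (p.getD (i + 1) d) := by
  rw [List.getD_eq_getElem _ _ (by omega), List.getD_eq_getElem _ _ hi]
  exact (isWalk_iff_isChain.mp hp).getElem i hi

theorem edgeIn_getD (p : List V) (d : V) {i : ℕ} (hi : i + 1 < p.length) :
    edgeIn p (p.getD i d) (p.getD (i + 1) d) := by
  rw [List.getD_eq_getElem _ _ (by omega), List.getD_eq_getElem _ _ hi]
  exact Or.inl (List.mem_iff_getElem.mpr ⟨i, by simp only [List.length_zip, List.length_tail]; omega,
    by simp⟩)

section Weight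

variable [AddCommMonoid α] (w : V → V → α)

theorem wWeight_eq_sum (d : V) : ∀ p : List V,
    wWeight w p = ∑ i ∈ range (p.length - 1), w (p.getD i d) (p.getD (i + 1) d)
  | [] | [_] => by simp [wWeight]
  | a :: b :: l => by
    rw [wWeight, wWeight_eq_sum d (b :: l)]
    simp [sum_range_succ' _ l.length, add_comm]

variable [PartialOrder α] [IsOrderedAddMonoid α] {w}

theorem sum_range_le_wWeight (hw : ∀ a b, E a b → 0 ≤ w a b) {p : List V} (hp : IsWalk E p)
    (d : V) {k : ℕ} (hk : k ≤ p.length - 1) :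
    ∑ i ∈ range k, w (p.getD i d) (p.getD (i + 1) d) ≤ wWeight w p := by
  rw [wWeight_eq_sum w d]
  exact sum_le_sum_of_subset_of_nonneg (range_subset_range.mpr hk)
    fun i hi _ => hw _ _ (hp.adj_getD d (by rw [mem_range] at hi; omega))

theorem wWeight_nonneg (hw : ∀ a b, E a b → 0 ≤ w a b) :
    ∀ {p : List V}, IsWalk E p → 0 ≤ wWeight w p
  | [], _ | [_], _ => by simp [wWeight]
  | a :: b :: _, hp => add_nonneg (hw a b hp.1) (wWeight_nonneg hw hp.2)

theorem IsWalkFrom.wWeight_pos [AddLeftStrictMono α] (hw : ∀ a b, E a b → 0 < w a b)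
    {p : List V} {u v : V} (hp : IsWalkFrom E p u v) (huv : u ≠ v) : 0 < wWeight w p := by
  obtain ⟨hwalk, hu, hv⟩ := hp
  match p, hwalk with
  | [], _ => simp at hu
  | [_], _ => simp_all
  | a :: b :: _, hwalk =>
    exact add_pos_of_pos_of_nonneg (hw a b hwalk.1)
      (wWeight_nonneg (fun a b h => (hw a b h).le) hwalk.2)

end Weight

def cycleOfPrefix (p : List V) (n : ℕ) (d : V) (j : ℕ) : V :=
  p.getD (j % n) d

section cycleOfPrefix

variable {p : List V} {n : ℕ} {d : V}

theorem cycleOfPrefix_add_period (j : ℕ) :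
    cycleOfPrefix p n d (j + n) = cycleOfPrefix p n d j := by
  simp [cycleOfPrefix]

theorem cycleOfPrefix_rel {R : V → V → Prop} (hn : 0 < n)
    (hadj : ∀ i, i + 1 < n → R (p.getD i d) (p.getD (i + 1) d))
    (hclose : R (p.getD (n - 1) d) (p.getD 0 d)) (j : ℕ) :
    R (cycleOfPrefix p n d j) (cycleOfPrefix p n d (j + 1)) := by
  have hsucc : (j + 1) % n = (j % n + 1) % n := (Nat.mod_add_mod j n 1).symm
  have hj : j % n < n := Nat.mod_lt j hn
  unfold cycleOfPrefix
  obtain hlt | heq : j % n + 1 < n ∨ j % n + 1 = n := by omega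
  · rw [hsucc, Nat.mod_eq_of_lt hlt]
    exact hadj _ hlt
  · rw [hsucc, heq, Nat.mod_self, show j % n = n - 1 by omega]
    exact hclose

theorem cycleOfPrefix_injective (hp : p.Nodup) (hn : n ≤ p.length) {i j : ℕ} (hi : i < n)
    (hj : j < n) (h : cycleOfPrefix p n d i = cycleOfPrefix p n d j) : i = j := by
  rw [cycleOfPrefix, cycleOfPrefix, Nat.mod_eq_of_lt hi, Nat.mod_eq_of_lt hj,
    List.getD_eq_getElem _ _ (by omega), List.getD_eq_getElem _ _ (by omega)] at h
  exact hp.getElem_inj_iff.mp h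

theorem arcW_cycleOfPrefix [AddCommMonoid α] (w : V → V → α) (n : ℕ) :
    arcW w (cycleOfPrefix p (n + 1) d) 0 (n + 1) =
      ∑ i ∈ range n, w (p.getD i d) (p.getD (i + 1) d) + w (p.getD n d) (p.getD 0 d) := by
  rw [arcW, sum_range_succ]
  congr 1
  · refine sum_congr rfl fun i hi => ?_
    simp only [mem_range] at hi
    simp only [cycleOfPrefix, zero_add, Nat.mod_eq_of_lt (by omega : i < n + 1),
      Nat.mod_eq_of_lt (by omega : i + 1 < n + 1)]
  · simp [cycleOfPrefix]

end cycleOfPrefix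

end

theorem stmt16_general {V : Type*} (E : V → V → Prop) (w : V → V → ℝ)
    (hwpos : ∀ a b, E a b → 0 < w a b)
    (x y z y' : V) (hxz : x ≠ z) (hyz : y ≠ z)
    (P1 P2 : List V)
    (hP1 : IsWalkFrom E P1 y x) (hP1nd : P1.Nodup)
    (hy' : P1[1]? = some y') (hy'z : y' ≠ z)
    (hP2 : IsWalkFrom E P2 x z) (hpre : P2 <+: P1.reverse)
    (hzy : E z y) :
    ∃ (m : ℕ) (c : ℕ → V), 3 ≤ m ∧ (∀ j, c (j + m) = c j) ∧
      (∀ j, E (c j) (c (j + 1))) ∧ (∀ i j, i < m → j < m → c i = c j → i = j) ∧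
      (∀ j, edgeIn P1 (c j) (c (j + 1)) ∨
        (c j = z ∧ c (j + 1) = y) ∨ (c j = y ∧ c (j + 1) = z)) ∧
      arcW w c 0 m < wWeight w P1 + wWeight w P2 + w z y := by
  obtain ⟨hwalk, hhead, -⟩ := hP1
  have hzP1 : z ∈ P1 := List.mem_reverse.mp (hpre.subset (List.mem_of_getLast? hP2.2.2))
  obtain ⟨k, hk, hkz⟩ := List.getElem_of_mem hzP1
  have hy : P1.getD 0 y = y := by simp [← List.head?_eq_getElem?, hhead]
  have hz : P1.getD k y = z := by rw [List.getD_eq_getElem _ _ hk, hkz]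
  have hk2 : 2 ≤ k := by
    by_contra! hlt
    obtain rfl | rfl : k = 0 ∨ k = 1 := by omega
    · exact hyz (hy.symm.trans hz)
    · exact hy'z (by simpa [List.getElem?_eq_getElem hk, hkz] using hy'.symm)
  refine ⟨k + 1, cycleOfPrefix P1 (k + 1) y, by omega, cycleOfPrefix_add_period,
    cycleOfPrefix_rel k.succ_pos (fun i hi => hwalk.adj_getD y (by omega))
      (by rwa [Nat.add_sub_cancel, hz, hy]),
    fun i j hi hj => cycleOfPrefix_injective hP1nd hk hi hj,
    cycleOfPrefix_rel (R := fun a b => edgeIn P1 a b ∨ (a = z ∧ b = y) ∨ (a = y ∧ b = z))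
      k.succ_pos (fun i hi => Or.inl (edgeIn_getD P1 y (by omega)))
      (by simp only [Nat.add_sub_cancel, hz, hy]; tauto), ?_⟩
  rw [arcW_cycleOfPrefix, hz, hy]
  have hprefix := sum_range_le_wWeight (fun a b h => (hwpos a b h).le) hwalk y
    (show k ≤ P1.length - 1 by omega)
  have hP2pos := hP2.wWeight_pos hwpos hxz
  linarith

/-- in an undirected graph with positive edge weights, let `x, y, z` be
distinct, `P₁` a simple path from `y` to `x` whose second vertex `y'` satisfies
`y' ≠ z`, `P₂` a simple path from `x` to `z` which (as a vertex sequence) is a prefix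
of the reverse of `P₁`, and `(z, y) ∈ E`. Then `P₁` together with the edge `(z, y)`
contains a simple cycle (on at least 3 vertices) of weight strictly less than
`w(P₁) + w(P₂) + w(z, y)`. -/
theorem stmt16 {V : Type*} (E : V → V → Prop) (w : V → V → ℝ)
    (hEsym : ∀ a b, E a b → E b a) (hwsym : ∀ a b, w a b = w b a)
    (hwpos : ∀ a b, E a b → 0 < w a b)
    (x y z y' : V) (hxy : x ≠ y) (hxz : x ≠ z) (hyz : y ≠ z)
    (P1 P2 : List V)
    (hP1 : IsWalkFrom E P1 y x) (hP1nd : P1.Nodup)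
    (hy' : P1[1]? = some y') (hy'z : y' ≠ z)
    (hP2 : IsWalkFrom E P2 x z) (hpre : P2 <+: P1.reverse)
    (hzy : E z y) :
    ∃ (m : ℕ) (c : ℕ → V), 3 ≤ m ∧ (∀ j, c (j + m) = c j) ∧
      (∀ j, E (c j) (c (j + 1))) ∧ (∀ i j, i < m → j < m → c i = c j → i = j) ∧
      (∀ j, edgeIn P1 (c j) (c (j + 1)) ∨
        (c j = z ∧ c (j + 1) = y) ∨ (c j = y ∧ c (j + 1) = z)) ∧
      arcW w c 0 m < wWeight w P1 + wWeight w P2 + w z y :=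
  stmt16_general E w hwpos x y z y' hxz hyz P1 P2 hP1 hP1nd hy' hy'z hP2 hpre hzy
end
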